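/- arXiv:2509.05956 — 7 statements merged into one kernel-verified Lean document; each statement's English description precedes it below -/
import Mathlib

section
/- Fix an item i and three choices j, j', j'' such that choices j' and j'' double-dominate choice j, i.e., w(i,j') < w(i,j) < w(i,j''), μ(i,j') ≤ μ(i,j) ≤ μ(i,j''), and (μ(i,j) − μ(i,j'))·(w(i,j'') − w(i,j)) ≥ (μ(i,j'') − μ(i,j))·(w(i,j) − w(i,j')). Then for every feasible solution x ∈ F(t), the modified solution x* defined by x*(i,j') = x(i,j') + x(i,j)·(w(i,j'') − w(i,j))/(w(i,j'') − w(i,j')), x*(i,j'') = x(i,j'') + x(i,j)·(w(i,j) − w(i,j'))/(w(i,j'') − w(i,j')), x*(i,j) = 0, and x*(i',j''') = x(i',j''') for all other pairs, is also feasible (x* ∈ F(t)) and satisfies V(x*) = V(x). -/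
/-- Double-dominance replacement step (Lemma 3.3 of the paper).
If choices `j'` and `j''` double-dominate choice `j` for item `i`, then splitting the
mass of `(i,j)` between `(i,j')` and `(i,j'')` in the appropriate proportions preserves
feasibility and keeps the objective value unchanged. -/
theorem double_dominance_replacement
    (n m : ℕ) (hn : 1 ≤ n) (hm : 1 ≤ m)
    (w μ : Fin n → Fin m → ℝ)
    (hμnn : ∀ i j, 0 ≤ μ i j)
    (t : ℝ) (ht : 0 < t)
    (i : Fin n) (j j' j'' : Fin m)
    (hw1 : w i j' < w i j) (hw2 : w i j < w i j'')
    (hμ1 : μ i j' ≤ μ i j) (hμ2 : μ i j ≤ μ i j'')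
    (hslope : (μ i j'' - μ i j) * (w i j - w i j')
                ≤ (μ i j - μ i j') * (w i j'' - w i j))
    (x : Fin n → Fin m → ℝ)
    (hx0 : ∀ i' j''', 0 ≤ x i' j''')
    (hx1 : ∀ i', ∑ j''', x i' j''' = 1)
    (hxt : ∑ i', ∑ j''', μ i' j''' * x i' j''' ≤ t)
    (xs : Fin n → Fin m → ℝ)
    (hxs : xs = fun i' j''' =>
      if i' = i then
        (if j''' = j then 0
         else if j''' = j' then
           x i j' + x i j * ((w i j'' - w i j) / (w i j'' - w i j'))
         else if j''' = j'' then
           x i j'' + x i j * ((w i j - w i j') / (w i j'' - w i j'))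
         else x i' j''')
      else x i' j''') :
    (∀ i' j''', 0 ≤ xs i' j''') ∧
    (∀ i', ∑ j''', xs i' j''' = 1) ∧
    (∑ i', ∑ j''', μ i' j''' * xs i' j''' ≤ t) ∧
    (∑ i', ∑ j''', w i' j''' * xs i' j''' = ∑ i', ∑ j''', w i' j''' * x i' j''') := by
  subst hxs
  beta_reduce
  have hD : 0 < w i j'' - w i j' := by linarith
  have hjj' : j ≠ j' := by intro h; rw [h] at hw1; exact lt_irrefl _ hw1
  have hjj'' : j ≠ j'' := by intro h; rw [h] at hw2; exact lt_irrefl _ hw2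
  have hj'j'' : j' ≠ j'' := by intro h; rw [h] at hw1; linarith
  set a : ℝ := (w i j'' - w i j) / (w i j'' - w i j') with ha_def
  set b : ℝ := (w i j - w i j') / (w i j'' - w i j') with hb_def
  have ha : 0 ≤ a := div_nonneg (by linarith) hD.le
  have hb : 0 ≤ b := div_nonneg (by linarith) hD.le
  have hab : a + b = 1 := by
    rw [ha_def, hb_def, ← add_div, div_eq_one_iff_eq hD.ne']
    ring
  have hrow : ∀ c : Fin m → ℝ,
      (∑ k, c k * (if k = j then 0 else if k = j' then x i j' + x i j * a
        else if k = j'' then x i j'' + x i j * b else x i k))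
      = (∑ k, c k * x i k) + x i j * (c j' * a + c j'' * b - c j) := by
    intro c
    have hpt : ∀ k, c k * (if k = j then 0 else if k = j' then x i j' + x i j * a
        else if k = j'' then x i j'' + x i j * b else x i k)
        = c k * x i k + ((if k = j then -(c j * x i j) else 0)
          + (if k = j' then c j' * (x i j * a) else 0)
          + (if k = j'' then c j'' * (x i j * b) else 0)) := by
      intro k
      by_cases h1 : k = j
      · subst h1; simp [hjj', hjj'']; try ring
      · by_cases h2 : k = j'
        · subst h2; simp [h1, hj'j'']; try ring
        · by_cases h3 : k = j''
          · subst h3; simp [h1, h2]; try ring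
          · simp [h1, h2, h3]
    rw [Finset.sum_congr rfl (fun k _ => hpt k), Finset.sum_add_distrib,
      Finset.sum_add_distrib, Finset.sum_add_distrib]
    simp [Finset.sum_ite_eq']
    try ring
  refine ⟨?_, ?_, ?_, ?_⟩
  · intro i' k
    by_cases hi : i' = i
    · rw [hi]
      simp only [eq_self_iff_true, if_true]
      split_ifs
      · exact le_refl 0
      · exact add_nonneg (hx0 i j') (mul_nonneg (hx0 i j) ha)
      · exact add_nonneg (hx0 i j'') (mul_nonneg (hx0 i j) hb)
      · exact hx0 i k
    · rw [if_neg hi]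
      exact hx0 i' k
  · intro i'
    by_cases hi : i' = i
    · rw [hi]
      simp only [eq_self_iff_true, if_true]
      have h1 := hrow (fun _ => 1)
      simp only [one_mul] at h1
      rw [h1, hx1 i, hab]
      ring
    · simp only [if_neg hi]
      exact hx1 i'
  · have key : (∑ i', ∑ k, μ i' k * (if i' = i then (if k = j then 0
        else if k = j' then x i j' + x i j * a
        else if k = j'' then x i j'' + x i j * b else x i' k) else x i' k))
        ≤ ∑ i', ∑ k, μ i' k * x i' k := by
      apply Finset.sum_le_sum
      intro i' _
      by_cases hi : i' = i
      · rw [hi]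
        simp only [eq_self_iff_true, if_true]
        rw [hrow (μ i)]
        have hcomb : μ i j' * a + μ i j'' * b - μ i j ≤ 0 := by
          have heq : μ i j' * a + μ i j'' * b - μ i j
              = (μ i j' * (w i j'' - w i j) + μ i j'' * (w i j - w i j')
                - μ i j * (w i j'' - w i j')) / (w i j'' - w i j') := by
            rw [ha_def, hb_def]; field_simp
          rw [heq]
          apply div_nonpos_of_nonpos_of_nonneg _ hD.le
          nlinarith [hslope]
        nlinarith [mul_nonpos_of_nonneg_of_nonpos (hx0 i j) hcomb]
      · simp only [if_neg hi]
        exact le_refl _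
    exact key.trans hxt
  · apply Finset.sum_congr rfl
    intro i' _
    by_cases hi : i' = i
    · rw [hi]
      simp only [eq_self_iff_true, if_true]
      rw [hrow (w i)]
      have hcomb : w i j' * a + w i j'' * b - w i j = 0 := by
        rw [ha_def, hb_def]; field_simp; ring
      rw [hcomb, mul_zero, add_zero]
    · simp only [if_neg hi]
end

section
/- Suppose the feasible set F(t) is nonempty. Then there exists an optimal solution x ∈ F(t) (i.e., a feasible solution attaining the maximum of V over F(t)) such that for every item i ∈ [n], at most two choices j satisfy x(i,j) > 0. -/
open Finset

namespace TwoChoicesAux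

variable {n m : ℕ}

/-- A linear functional on assignment matrices. -/
def lin (g x : Fin n → Fin m → ℝ) : ℝ := ∑ i, ∑ j, g i j * x i j

/-- Feasibility for the LP. -/
def Feas (μ : Fin n → Fin m → ℝ) (t : ℝ) (x : Fin n → Fin m → ℝ) : Prop :=
  (∀ i j, 0 ≤ x i j) ∧ (∀ i, ∑ j, x i j = 1) ∧ lin μ x ≤ t

lemma lin_continuous (g : Fin n → Fin m → ℝ) : Continuous (lin g) :=
  continuous_finset_sum _ fun i _ => continuous_finset_sum _ fun j _ =>
    continuous_const.mul ((continuous_apply j).comp (continuous_apply i))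

lemma feas_isClosed (μ : Fin n → Fin m → ℝ) (t : ℝ) : IsClosed {x | Feas μ t x} := by
  have h1 : IsClosed {x : Fin n → Fin m → ℝ | ∀ i j, 0 ≤ x i j} := by
    have he : {x : Fin n → Fin m → ℝ | ∀ i j, 0 ≤ x i j} = ⋂ i, ⋂ j, {x | 0 ≤ x i j} := by
      ext x; simp [Set.mem_iInter]
    rw [he]
    exact isClosed_iInter fun i => isClosed_iInter fun j =>
      isClosed_le continuous_const ((continuous_apply j).comp (continuous_apply i))
  have h2 : IsClosed {x : Fin n → Fin m → ℝ | ∀ i, ∑ j, x i j = 1} := by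
    have he : {x : Fin n → Fin m → ℝ | ∀ i, ∑ j, x i j = 1} = ⋂ i, {x | ∑ j, x i j = 1} := by
      ext x; simp [Set.mem_iInter]
    rw [he]
    exact isClosed_iInter fun i =>
      isClosed_eq (continuous_finset_sum _ fun j _ =>
        (continuous_apply j).comp (continuous_apply i)) continuous_const
  have h3 : IsClosed {x : Fin n → Fin m → ℝ | lin μ x ≤ t} :=
    isClosed_le (lin_continuous μ) continuous_const
  have he : {x | Feas μ t x}
      = {x : Fin n → Fin m → ℝ | ∀ i j, 0 ≤ x i j}
        ∩ ({x | ∀ i, ∑ j, x i j = 1} ∩ {x | lin μ x ≤ t}) := rfl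
  rw [he]; exact h1.inter (h2.inter h3)

lemma feas_isCompact (μ : Fin n → Fin m → ℝ) (t : ℝ) : IsCompact {x | Feas μ t x} := by
  refine IsCompact.of_isClosed_subset
    (isCompact_Icc (a := (0 : Fin n → Fin m → ℝ)) (b := 1)) (feas_isClosed μ t) ?_
  rintro x ⟨hx0, hx1, -⟩
  constructor
  · intro i; intro j; exact hx0 i j
  · intro i; intro j
    calc x i j ≤ ∑ j', x i j' :=
          Finset.single_le_sum (fun j' _ => hx0 i j') (Finset.mem_univ j)
      _ = 1 := hx1 i

lemma exists_max (w μ : Fin n → Fin m → ℝ) (t : ℝ) (hne : ∃ x, Feas μ t x) :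
    ∃ x, Feas μ t x ∧ ∀ y, Feas μ t y → lin w y ≤ lin w x := by
  obtain ⟨x, hx, hmax⟩ := (feas_isCompact μ t).exists_isMaxOn hne (lin_continuous w).continuousOn
  exact ⟨x, hx, fun y hy => hmax hy⟩

/-- Total support size. -/
noncomputable def NN (x : Fin n → Fin m → ℝ) : ℕ :=
  ∑ i, (Finset.univ.filter fun j => 0 < x i j).card

end TwoChoicesAux

namespace TwoChoicesAux

variable {n m : ℕ}

lemma exchange (w μ : Fin n → Fin m → ℝ) (t : ℝ)
    (x : Fin n → Fin m → ℝ) (hx : Feas μ t x) (i : Fin n) (d : Fin m → ℝ)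
    (hsupp : ∀ j, d j ≠ 0 → 0 < x i j)
    (hsum : ∑ j, d j = 0)
    (hmu : ∑ j, μ i j * d j = 0)
    (hw : 0 ≤ ∑ j, w i j * d j)
    (hd : d ≠ 0) :
    ∃ x', Feas μ t x' ∧ lin w x ≤ lin w x' ∧
      (∀ i', (Finset.univ.filter fun j => 0 < x' i' j)
          ⊆ (Finset.univ.filter fun j => 0 < x i' j)) ∧
      ∃ j₀, 0 < x i j₀ ∧ ¬ 0 < x' i j₀ := by
  obtain ⟨hx0, hx1, hxb⟩ := hx
  -- there is a negative coordinate of d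
  have hnegne : (Finset.univ.filter fun j => d j < 0).Nonempty := by
    by_contra hc
    rw [Finset.not_nonempty_iff_eq_empty, Finset.filter_eq_empty_iff] at hc
    have hnn : ∀ j ∈ Finset.univ, 0 ≤ d j := fun j hj => not_lt.mp (hc hj)
    have hz : ∀ j ∈ Finset.univ, d j = 0 :=
      (Finset.sum_eq_zero_iff_of_nonneg hnn).mp hsum
    exact hd (funext fun j => hz j (Finset.mem_univ j))
  obtain ⟨j₀, hj₀mem, hj₀min⟩ :=
    Finset.exists_min_image _ (fun j => x i j / (-d j)) hnegne
  have hdj₀ : d j₀ < 0 := (Finset.mem_filter.mp hj₀mem).2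
  set s : ℝ := x i j₀ / (-d j₀) with hs_def
  have hxj₀ : 0 < x i j₀ := hsupp j₀ (ne_of_lt hdj₀)
  have hs : 0 < s := div_pos hxj₀ (neg_pos.mpr hdj₀)
  set x' : Fin n → Fin m → ℝ := Function.update x i (fun j => x i j + s * d j) with hx'_def
  have hx'i : ∀ j, x' i j = x i j + s * d j := fun j => by
    simp [hx'_def, Function.update_self]
  have hx'ne : ∀ i', i' ≠ i → x' i' = x i' := fun i' h => by
    simp [hx'_def, Function.update_of_ne h]
  -- nonnegativity
  have hnneg : ∀ i' j, 0 ≤ x' i' j := by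
    intro i' j
    by_cases h : i' = i
    · subst h; rw [hx'i]
      by_cases hdj : d j < 0
      · have hmem : j ∈ Finset.univ.filter fun j => d j < 0 :=
          Finset.mem_filter.mpr ⟨Finset.mem_univ j, hdj⟩
        have hle : s ≤ x i' j / (-d j) := hj₀min j hmem
        have hpos : 0 < -d j := neg_pos.mpr hdj
        have := (le_div_iff₀ hpos).mp hle
        nlinarith
      · have h1 : 0 ≤ d j := not_lt.mp hdj
        have h2 := hx0 i' j
        nlinarith
    · rw [hx'ne i' h]; exact hx0 i' j
  -- row sums
  have hrow : ∀ i', ∑ j, x' i' j = 1 := by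
    intro i'
    by_cases h : i' = i
    · subst h
      have : ∑ j, x' i' j = ∑ j, (x i' j + s * d j) := by
        exact Finset.sum_congr rfl fun j _ => hx'i j
      rw [this, Finset.sum_add_distrib, hx1 i', ← Finset.mul_sum, hsum, mul_zero, add_zero]
    · rw [hx'ne i' h]; exact hx1 i'
  -- lin for any weights
  have hlin : ∀ g : Fin n → Fin m → ℝ, lin g x' = lin g x + s * ∑ j, g i j * d j := by
    intro g
    have hrows : ∀ i', ∑ j, g i' j * x' i' j
        = (∑ j, g i' j * x i' j) + (if i' = i then s * ∑ j, g i j * d j else 0) := by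
      intro i'
      by_cases h : i' = i
      · subst h
        simp only [if_true]
        have : ∀ j, g i' j * x' i' j = g i' j * x i' j + s * (g i' j * d j) := by
          intro j; rw [hx'i]; ring
        rw [Finset.sum_congr rfl fun j _ => this j, Finset.sum_add_distrib, ← Finset.mul_sum]
      · rw [hx'ne i' h, if_neg h, add_zero]
    unfold lin
    rw [Finset.sum_congr rfl fun i' _ => hrows i', Finset.sum_add_distrib,
      Finset.sum_ite_eq' Finset.univ i (fun _ => s * ∑ j, g i j * d j)]
    simp
  -- feasibility
  have hfeas : Feas μ t x' := by
    refine ⟨hnneg, hrow, ?_⟩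
    rw [hlin μ, hmu, mul_zero, add_zero]; exact hxb
  -- objective
  have hobj : lin w x ≤ lin w x' := by
    rw [hlin w]; nlinarith
  -- support
  have hsub : ∀ i', (Finset.univ.filter fun j => 0 < x' i' j)
      ⊆ (Finset.univ.filter fun j => 0 < x i' j) := by
    intro i' j hj
    have hj' : 0 < x' i' j := (Finset.mem_filter.mp hj).2
    refine Finset.mem_filter.mpr ⟨Finset.mem_univ j, ?_⟩
    by_cases h : i' = i
    · subst h
      by_cases hdj : d j = 0
      · rw [hx'i, hdj, mul_zero, add_zero] at hj'; exact hj'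
      · exact hsupp j hdj
    · rw [hx'ne i' h] at hj'; exact hj'
  refine ⟨x', hfeas, hobj, hsub, j₀, hxj₀, ?_⟩
  have : x' i j₀ = 0 := by
    rw [hx'i, hs_def]
    have hne : d j₀ ≠ 0 := ne_of_lt hdj₀
    rw [div_mul_eq_mul_div, div_neg, mul_div_assoc, div_self hne, mul_one]
    ring
  rw [this]; exact lt_irrefl 0

end TwoChoicesAux


/-- Lemma 3.4 of the paper: if the feasible set `F(t)` of the LP `Φ(t)` is nonempty,
then there is an optimal solution in which every item has at most two choices with
positive weight. -/
theorem exists_optimal_two_choices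
    (n m : ℕ) (hn : 1 ≤ n) (hm : 1 ≤ m)
    (w μ : Fin n → Fin m → ℝ)
    (hμnn : ∀ i j, 0 ≤ μ i j)
    (t : ℝ) (ht : 0 < t)
    (hne : ∃ x : Fin n → Fin m → ℝ,
      (∀ i j, 0 ≤ x i j) ∧ (∀ i, ∑ j, x i j = 1) ∧
      ∑ i, ∑ j, μ i j * x i j ≤ t) :
    ∃ x : Fin n → Fin m → ℝ,
      ((∀ i j, 0 ≤ x i j) ∧ (∀ i, ∑ j, x i j = 1) ∧
        ∑ i, ∑ j, μ i j * x i j ≤ t) ∧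
      (∀ y : Fin n → Fin m → ℝ,
        ((∀ i j, 0 ≤ y i j) ∧ (∀ i, ∑ j, y i j = 1) ∧
          ∑ i, ∑ j, μ i j * y i j ≤ t) →
        ∑ i, ∑ j, w i j * y i j ≤ ∑ i, ∑ j, w i j * x i j) ∧
      (∀ i, (Finset.univ.filter fun j => 0 < x i j).card ≤ 2) := by
  obtain ⟨x0, hx00⟩ : ∃ x, TwoChoicesAux.Feas μ t x := by
    obtain ⟨x, h1, h2, h3⟩ := hne; exact ⟨x, h1, h2, h3⟩
  set S : Set ℕ := {k | ∃ x, TwoChoicesAux.Feas μ t x ∧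
      (∀ y, TwoChoicesAux.Feas μ t y → TwoChoicesAux.lin w y ≤ TwoChoicesAux.lin w x) ∧
      TwoChoicesAux.NN x = k} with hS_def
  have hSne : S.Nonempty := by
    obtain ⟨z, hz, hzmax⟩ := TwoChoicesAux.exists_max w μ t ⟨x0, hx00⟩
    exact ⟨_, z, hz, hzmax, rfl⟩
  obtain ⟨x, hxF, hxmax, hxN⟩ := Nat.sInf_mem hSne
  refine ⟨x, ⟨hxF.1, hxF.2.1, hxF.2.2⟩, fun y hy => hxmax y ⟨hy.1, hy.2.1, hy.2.2⟩, ?_⟩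
  intro i
  by_contra hcard
  push_neg at hcard
  obtain ⟨j1, j2, j3, h1m, h2m, h3m, h12, h13, h23⟩ := Finset.two_lt_card_iff.mp hcard
  have hp1 : 0 < x i j1 := (Finset.mem_filter.mp h1m).2
  have hp2 : 0 < x i j2 := (Finset.mem_filter.mp h2m).2
  have hp3 : 0 < x i j3 := (Finset.mem_filter.mp h3m).2
  obtain ⟨a, b, c, habc, hmabc, hnz⟩ :
      ∃ a b c : ℝ, a + b + c = 0 ∧ μ i j1 * a + μ i j2 * b + μ i j3 * c = 0 ∧
        ¬(a = 0 ∧ b = 0 ∧ c = 0) := by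
    by_cases hμeq : μ i j1 = μ i j2
    · exact ⟨1, -1, 0, by ring, by rw [hμeq]; ring, by simp⟩
    · exact ⟨μ i j2 - μ i j3, μ i j3 - μ i j1, μ i j1 - μ i j2, by ring, by ring,
        fun h => hμeq (sub_eq_zero.mp h.2.2)⟩
  set d : Fin m → ℝ := fun j =>
    (if j = j1 then a else 0) + (if j = j2 then b else 0) + (if j = j3 then c else 0)
    with hd_def
  have hsum_d : ∀ g : Fin m → ℝ, ∑ j, g j * d j = g j1 * a + g j2 * b + g j3 * c := by
    intro g
    simp only [hd_def, mul_add, Finset.sum_add_distrib, mul_ite, mul_zero,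
      Finset.sum_ite_eq', Finset.mem_univ, if_true]
  have hdj1 : d j1 = a := by simp [hd_def, h12, h13]
  have hdj2 : d j2 = b := by simp [hd_def, h12.symm, h23]
  have hdj3 : d j3 = c := by simp [hd_def, h13.symm, h23.symm]
  have hsupp' : ∀ j, d j ≠ 0 → 0 < x i j := by
    intro j hj
    rcases eq_or_ne j j1 with rfl | n1
    · exact hp1
    rcases eq_or_ne j j2 with rfl | n2
    · exact hp2
    rcases eq_or_ne j j3 with rfl | n3
    · exact hp3
    exact absurd (by simp [hd_def, n1, n2, n3]) hj
  have hdne : d ≠ 0 := by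
    intro h0
    exact hnz ⟨by rw [← hdj1, h0]; simp, by rw [← hdj2, h0]; simp, by rw [← hdj3, h0]; simp⟩
  have hsum' : ∑ j, d j = 0 := by
    have h := hsum_d (fun _ => 1)
    simp only [one_mul] at h
    calc ∑ j, d j = ∑ j, (fun _ => (1:ℝ)) j * d j := by simp
      _ = a + b + c := by rw [hsum_d]; ring
      _ = 0 := habc
  have hmu' : ∑ j, μ i j * d j = 0 := (hsum_d (μ i)).trans hmabc
  obtain ⟨e, hesupp, hesum, hemu, hew, hene⟩ :
      ∃ e : Fin m → ℝ, (∀ j, e j ≠ 0 → 0 < x i j) ∧ (∑ j, e j = 0) ∧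
        (∑ j, μ i j * e j = 0) ∧ (0 ≤ ∑ j, w i j * e j) ∧ e ≠ 0 := by
    by_cases hwd : 0 ≤ ∑ j, w i j * d j
    · exact ⟨d, hsupp', hsum', hmu', hwd, hdne⟩
    · refine ⟨fun j => -(d j), ?_, ?_, ?_, ?_, ?_⟩
      · intro j hj
        exact hsupp' j fun h => hj (by simp [h])
      · simp [hsum']
      · simp only [mul_neg, Finset.sum_neg_distrib, hmu', neg_zero]
      · push_neg at hwd
        have he : ∑ j, w i j * -(d j) = -∑ j, w i j * d j := by
          simp [mul_neg]
        rw [he]; linarith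
      · intro h0
        apply hdne
        funext j
        have := congrFun h0 j
        simpa using neg_eq_zero.mp (by simpa using this)
  obtain ⟨x', hx'F, hx'obj, hx'sub, j₀, hj₀pos, hj₀zero⟩ :=
    TwoChoicesAux.exchange w μ t x hxF i e hesupp hesum hemu hew hene
  have hx'max : ∀ y, TwoChoicesAux.Feas μ t y →
      TwoChoicesAux.lin w y ≤ TwoChoicesAux.lin w x' :=
    fun y hy => (hxmax y hy).trans hx'obj
  have hlt : TwoChoicesAux.NN x' < TwoChoicesAux.NN x := by
    unfold TwoChoicesAux.NN
    refine Finset.sum_lt_sum (fun i' _ => Finset.card_le_card (hx'sub i'))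
      ⟨i, Finset.mem_univ i, ?_⟩
    refine Finset.card_lt_card ?_
    refine (Finset.ssubset_iff_of_subset (hx'sub i)).mpr ⟨j₀, ?_, ?_⟩
    · exact Finset.mem_filter.mpr ⟨Finset.mem_univ _, hj₀pos⟩
    · intro hmem; exact hj₀zero (Finset.mem_filter.mp hmem).2
  have hle : sInf S ≤ TwoChoicesAux.NN x' := Nat.sInf_le ⟨x', hx'F, hx'max, rfl⟩
  omega
end

section
/- Suppose the feasible set F(t) is nonempty. Then there exists an optimal solution x ∈ F(t) (i.e., a feasible solution attaining the maximum of V over F(t)) with the following structure: there is at most one item i* having exactly two choices j, j' with x(i*,j) > 0 and x(i*,j') > 0, and every other item i ≠ i* has exactly one choice j with x(i,j) = 1 (and x(i,j') = 0 for all j' ≠ j). -/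
namespace Opt314

variable {n m : ℕ}

def Feas (μ : Fin n → Fin m → ℝ) (t : ℝ) (x : Fin n → Fin m → ℝ) : Prop :=
  (∀ i j, 0 ≤ x i j) ∧ (∀ i, ∑ j, x i j = 1) ∧ ∑ i, ∑ j, μ i j * x i j ≤ t

def V (w : Fin n → Fin m → ℝ) (x : Fin n → Fin m → ℝ) : ℝ := ∑ i, ∑ j, w i j * x i j

noncomputable def supp (x : Fin n → Fin m → ℝ) : Finset (Fin n × Fin m) :=
  Finset.univ.filter fun p => x p.1 p.2 ≠ 0

lemma apply_cont (i : Fin n) (j : Fin m) : Continuous (fun x : Fin n → Fin m → ℝ => x i j) :=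
  (continuous_apply j).comp (continuous_apply i)

lemma V_cont (w : Fin n → Fin m → ℝ) : Continuous (V w) := by
  unfold V
  exact continuous_finset_sum _ fun i _ => continuous_finset_sum _ fun j _ =>
    continuous_const.mul (apply_cont i j)

lemma feas_le_one {μ : Fin n → Fin m → ℝ} {t : ℝ} {x} (hx : Feas μ t x) (i : Fin n) (j : Fin m) :
    x i j ≤ 1 := by
  obtain ⟨h0, h1, -⟩ := hx
  calc x i j ≤ ∑ j', x i j' := Finset.single_le_sum (fun j' _ => h0 i j') (Finset.mem_univ j)
  _ = 1 := h1 i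

lemma exists_opt (w μ : Fin n → Fin m → ℝ) (t : ℝ)
    (hne : ∃ x, Feas μ t x) :
    ∃ x, Feas μ t x ∧ ∀ y, Feas μ t y → V w y ≤ V w x := by
  have hclosed : IsClosed {x : Fin n → Fin m → ℝ | Feas μ t x} := by
    have h1 : IsClosed {x : Fin n → Fin m → ℝ | ∀ i j, 0 ≤ x i j} := by
      have : {x : Fin n → Fin m → ℝ | ∀ i j, 0 ≤ x i j} =
          ⋂ i, ⋂ j, {x | 0 ≤ x i j} := by ext x; simp [Set.mem_iInter]
      rw [this]
      exact isClosed_iInter fun i => isClosed_iInter fun j =>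
        isClosed_le continuous_const (apply_cont i j)
    have h2 : IsClosed {x : Fin n → Fin m → ℝ | ∀ i, ∑ j, x i j = 1} := by
      have : {x : Fin n → Fin m → ℝ | ∀ i, ∑ j, x i j = 1} =
          ⋂ i, {x | ∑ j, x i j = 1} := by ext x; simp [Set.mem_iInter]
      rw [this]
      exact isClosed_iInter fun i =>
        isClosed_eq (continuous_finset_sum _ fun j _ => apply_cont i j) continuous_const
    have h3 : IsClosed {x : Fin n → Fin m → ℝ | ∑ i, ∑ j, μ i j * x i j ≤ t} :=
      isClosed_le (continuous_finset_sum _ fun i _ => continuous_finset_sum _ fun j _ =>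
        continuous_const.mul (apply_cont i j)) continuous_const
    have : {x : Fin n → Fin m → ℝ | Feas μ t x} =
        {x | ∀ i j, 0 ≤ x i j} ∩ ({x | ∀ i, ∑ j, x i j = 1} ∩
          {x | ∑ i, ∑ j, μ i j * x i j ≤ t}) := by
      ext x; exact Iff.rfl
    rw [this]
    exact h1.inter (h2.inter h3)
  have hsub : {x : Fin n → Fin m → ℝ | Feas μ t x} ⊆
      Set.univ.pi fun _ : Fin n => Set.univ.pi fun _ : Fin m => Set.Icc (0:ℝ) 1 := by
    intro x hx
    rw [Set.mem_univ_pi]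
    intro i
    rw [Set.mem_univ_pi]
    intro j
    exact ⟨hx.1 i j, feas_le_one hx i j⟩
  have hcompact : IsCompact {x : Fin n → Fin m → ℝ | Feas μ t x} :=
    IsCompact.of_isClosed_subset
      (isCompact_univ_pi fun _ => isCompact_univ_pi fun _ => isCompact_Icc) hclosed hsub
  obtain ⟨x, hx, hmax⟩ := hcompact.exists_isMaxOn hne (V_cont w).continuousOn
  exact ⟨x, hx, fun y hy => hmax hy⟩

lemma lin_sum (c x d : Fin n → Fin m → ℝ) (e : ℝ) :
    ∑ i, ∑ j, c i j * (x i j + e * d i j)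
      = (∑ i, ∑ j, c i j * x i j) + e * ∑ i, ∑ j, c i j * d i j := by
  rw [Finset.mul_sum]
  rw [← Finset.sum_add_distrib]
  refine Finset.sum_congr rfl fun i _ => ?_
  rw [Finset.mul_sum, ← Finset.sum_add_distrib]
  refine Finset.sum_congr rfl fun j _ => ?_
  ring

lemma row_sum (x d : Fin n → Fin m → ℝ) (e : ℝ) (i : Fin n) :
    ∑ j, (x i j + e * d i j) = (∑ j, x i j) + e * ∑ j, d i j := by
  rw [Finset.mul_sum, ← Finset.sum_add_distrib]

lemma shrink (w μ : Fin n → Fin m → ℝ) (t : ℝ) (x : Fin n → Fin m → ℝ)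
    (hx : Feas μ t x) (hmax : ∀ y, Feas μ t y → V w y ≤ V w x)
    (d : Fin n → Fin m → ℝ)
    (hd0 : ∀ i j, x i j = 0 → d i j = 0)
    (hrow : ∀ i, ∑ j, d i j = 0)
    (hμd : ∑ i, ∑ j, μ i j * d i j = 0)
    (hdne : d ≠ 0) :
    ∃ x', Feas μ t x' ∧ (∀ y, Feas μ t y → V w y ≤ V w x') ∧ supp x' ⊂ supp x := by
  have hpos : ∀ i j, d i j ≠ 0 → 0 < x i j := fun i j h =>
    (hx.1 i j).lt_of_ne fun he => h (hd0 i j he.symm)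
  obtain ⟨i₀, j₀, hij₀⟩ : ∃ i j, d i j ≠ 0 := by
    by_contra h
    push_neg at h
    exact hdne (funext fun i => funext fun j => h i j)
  have hwd : ∑ i, ∑ j, w i j * d i j = 0 := by
    set T0 : Finset (Fin n × Fin m) := Finset.univ.filter fun p => d p.1 p.2 ≠ 0 with hT0
    have hT0ne : T0.Nonempty := ⟨(i₀, j₀), by simp [hT0, hij₀]⟩
    set ε₀ : ℝ := T0.inf' hT0ne fun p => x p.1 p.2 / |d p.1 p.2| with hε₀
    have hε₀pos : 0 < ε₀ := by
      rw [hε₀, Finset.lt_inf'_iff]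
      intro p hp
      have hdp : d p.1 p.2 ≠ 0 := by simpa [hT0] using hp
      exact div_pos (hpos _ _ hdp) (abs_pos.mpr hdp)
    have key : ∀ e : ℝ, |e| ≤ ε₀ → Feas μ t fun i j => x i j + e * d i j := by
      intro e he
      refine ⟨fun i j => ?_, fun i => ?_, ?_⟩
      · show 0 ≤ x i j + e * d i j
        by_cases hd : d i j = 0
        · simp [hd, hx.1 i j]
        · have h1 : ε₀ ≤ x i j / |d i j| :=
            Finset.inf'_le _ (by simp [hT0, hd] : ((i, j) : Fin n × Fin m) ∈ T0)
          have h2 : |e * d i j| ≤ x i j := by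
            rw [abs_mul]
            calc |e| * |d i j| ≤ ε₀ * |d i j| :=
              mul_le_mul_of_nonneg_right he (abs_nonneg _)
            _ ≤ (x i j / |d i j|) * |d i j| :=
              mul_le_mul_of_nonneg_right h1 (abs_nonneg _)
            _ = x i j := div_mul_cancel₀ _ (abs_ne_zero.mpr hd)
          nlinarith [neg_abs_le (e * d i j)]
      · rw [row_sum, hx.2.1 i, hrow i, mul_zero, add_zero]
      · rw [lin_sum, hμd, mul_zero, add_zero]; exact hx.2.2
    have h1 := hmax _ (key ε₀ (by rw [abs_of_pos hε₀pos]))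
    have h2 := hmax _ (key (-ε₀) (by rw [abs_neg, abs_of_pos hε₀pos]))
    unfold V at h1 h2
    rw [lin_sum] at h1 h2
    nlinarith
  obtain ⟨i₁, j₁, hneg⟩ : ∃ i j, d i j < 0 := by
    by_contra h
    push_neg at h
    have := Finset.sum_eq_zero_iff_of_nonneg (fun j _ => h i₀ j) |>.mp (hrow i₀)
    exact hij₀ (this j₀ (Finset.mem_univ _))
  set T : Finset (Fin n × Fin m) := Finset.univ.filter fun p => d p.1 p.2 < 0 with hT
  have hTne : T.Nonempty := ⟨(i₁, j₁), by simp [hT, hneg]⟩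
  set ε : ℝ := T.inf' hTne fun p => x p.1 p.2 / (-d p.1 p.2) with hε
  have hεpos : 0 < ε := by
    rw [hε, Finset.lt_inf'_iff]
    intro p hp
    have hdp : d p.1 p.2 < 0 := by simpa [hT] using hp
    exact div_pos (hpos _ _ hdp.ne) (by linarith)
  obtain ⟨p₀, hp₀T, hp₀⟩ := Finset.exists_mem_eq_inf' hTne fun p => x p.1 p.2 / (-d p.1 p.2)
  have hdp₀ : d p₀.1 p₀.2 < 0 := by simpa [hT] using hp₀T
  refine ⟨fun i j => x i j + ε * d i j, ⟨fun i j => ?_, fun i => ?_, ?_⟩, ?_, ?_, ?_⟩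
  · show 0 ≤ x i j + ε * d i j
    by_cases hd : 0 ≤ d i j
    · have : 0 ≤ ε * d i j := mul_nonneg hεpos.le hd
      linarith [hx.1 i j]
    · push_neg at hd
      have h1 : ε ≤ x i j / (-d i j) :=
        Finset.inf'_le _ (by simp [hT, hd] : ((i, j) : Fin n × Fin m) ∈ T)
      rw [le_div_iff₀ (by linarith : (0:ℝ) < -d i j)] at h1
      nlinarith
  · rw [row_sum, hx.2.1 i, hrow i, mul_zero, add_zero]
  · rw [lin_sum, hμd, mul_zero, add_zero]; exact hx.2.2
  · intro y hy
    have : V w (fun i j => x i j + ε * d i j) = V w x := by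
      unfold V; rw [lin_sum, hwd, mul_zero, add_zero]
    rw [this]; exact hmax y hy
  · intro p hp
    simp only [supp, Finset.mem_filter, Finset.mem_univ, true_and] at hp ⊢
    intro hxp
    exact hp (by rw [hxp, hd0 _ _ hxp, mul_zero, add_zero])
  · intro hsub
    have hp₀mem : p₀ ∈ supp x := by
      simp only [supp, Finset.mem_filter, Finset.mem_univ, true_and]
      exact (hpos _ _ hdp₀.ne).ne'
    have := hsub hp₀mem
    simp only [supp, Finset.mem_filter, Finset.mem_univ, true_and] at this
    apply this
    rw [← hε] at hp₀
    rw [hp₀]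
    have hne' : d p₀.1 p₀.2 ≠ 0 := hdp₀.ne
    have heq : x p₀.1 p₀.2 / -d p₀.1 p₀.2 * d p₀.1 p₀.2 = - x p₀.1 p₀.2 := by
      rw [div_neg, neg_mul, div_mul_cancel₀ _ hne']
    rw [heq]
    ring

def elem (i0 : Fin n) (a b : Fin m) (c : ℝ) : Fin n → Fin m → ℝ :=
  fun i j => if i = i0 then (if j = a then c else 0) - (if j = b then c else 0) else 0

lemma elem_row (i0 : Fin n) (a b : Fin m) (c : ℝ) (i : Fin n) :
    ∑ j, elem i0 a b c i j = 0 := by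
  by_cases hi : i = i0 <;>
    simp [elem, hi, Finset.sum_sub_distrib, Finset.sum_ite_eq']

lemma elem_wsum (f : Fin n → Fin m → ℝ) (i0 : Fin n) (a b : Fin m) (c : ℝ) :
    ∑ i, ∑ j, f i j * elem i0 a b c i j = c * f i0 a - c * f i0 b := by
  have key : ∀ i, ∑ j, f i j * elem i0 a b c i j
      = if i = i0 then c * f i0 a - c * f i0 b else 0 := by
    intro i
    by_cases hi : i = i0
    · subst hi
      simp [elem, mul_sub, mul_ite, mul_zero, Finset.sum_sub_distrib,
        Finset.sum_ite_eq', mul_comm]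
    · simp [elem, hi]
  rw [Finset.sum_congr rfl fun i _ => key i]
  simp [Finset.sum_ite_eq']

lemma elem_support {i0 : Fin n} {a b : Fin m} {c : ℝ} {i : Fin n} {j : Fin m}
    (h : elem i0 a b c i j ≠ 0) : i = i0 ∧ (j = a ∨ j = b) := by
  by_contra hc
  apply h
  by_cases hi : i = i0
  · have hj : ¬(j = a ∨ j = b) := fun hj => hc ⟨hi, hj⟩
    push_neg at hj
    simp [elem, hi, hj.1, hj.2]
  · simp [elem, hi]

lemma elem_apply_b {i0 : Fin n} {a b : Fin m} (c : ℝ) (hab : b ≠ a) :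
    elem i0 a b c i0 b = -c := by
  simp [elem, hab]

lemma master (w μ : Fin n → Fin m → ℝ) (t : ℝ) (x : Fin n → Fin m → ℝ)
    (hx : Feas μ t x) (hmax : ∀ y, Feas μ t y → V w y ≤ V w x)
    (hmin : ∀ x', Feas μ t x' → (∀ y, Feas μ t y → V w y ≤ V w x') →
      (supp x).card ≤ (supp x').card)
    {i i' : Fin n} {a b a' b' : Fin m} (hab : b ≠ a) (ha'b' : b' ≠ a')
    (h1 : (i, b) ≠ (i', a')) (h2 : (i, b) ≠ (i', b'))
    (hxa : 0 < x i a) (hxb : 0 < x i b) (hxa' : 0 < x i' a') (hxb' : 0 < x i' b') :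
    False := by
  set δ : ℝ := μ i a - μ i b with hδdef
  set δ' : ℝ := μ i' a' - μ i' b' with hδ'def
  have hfin : ∀ d : Fin n → Fin m → ℝ, (∀ p q, x p q = 0 → d p q = 0) →
      (∀ p, ∑ q, d p q = 0) → (∑ p, ∑ q, μ p q * d p q = 0) → d ≠ 0 → False := by
    intro d hd0 hrow hμd hdne
    obtain ⟨x', hfe, hmax', hss⟩ := shrink w μ t x hx hmax d hd0 hrow hμd hdne
    have := hmin x' hfe hmax'
    have := Finset.card_lt_card hss
    omega
  by_cases hδ' : δ' = 0
  · refine hfin (elem i' a' b' 1) ?_ (elem_row i' a' b' 1) ?_ ?_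
    · intro p q hpq
      by_contra hne
      obtain ⟨hp, hq⟩ := elem_support hne
      subst hp
      rcases hq with h | h <;> subst h
      · exact hxa'.ne' hpq
      · exact hxb'.ne' hpq
    · rw [elem_wsum]
      simpa using hδ'
    · intro heq
      have := congrFun (congrFun heq i') b'
      rw [elem_apply_b 1 ha'b'] at this
      norm_num at this
  · refine hfin (fun p q => elem i a b δ' p q + elem i' a' b' (-δ) p q) ?_ ?_ ?_ ?_
    · intro p q hpq
      have hz1 : elem i a b δ' p q = 0 := by
        by_contra hne
        obtain ⟨hp, hq⟩ := elem_support hne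
        subst hp
        rcases hq with h | h <;> subst h
        · exact hxa.ne' hpq
        · exact hxb.ne' hpq
      have hz2 : elem i' a' b' (-δ) p q = 0 := by
        by_contra hne
        obtain ⟨hp, hq⟩ := elem_support hne
        subst hp
        rcases hq with h | h <;> subst h
        · exact hxa'.ne' hpq
        · exact hxb'.ne' hpq
      show elem i a b δ' p q + elem i' a' b' (-δ) p q = 0
      rw [hz1, hz2, add_zero]
    · intro p
      rw [Finset.sum_add_distrib, elem_row, elem_row, add_zero]
    · have : ∀ p, ∑ q, μ p q * (elem i a b δ' p q + elem i' a' b' (-δ) p q)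
          = (∑ q, μ p q * elem i a b δ' p q) + ∑ q, μ p q * elem i' a' b' (-δ) p q := by
        intro p
        rw [← Finset.sum_add_distrib]
        exact Finset.sum_congr rfl fun q _ => by ring
      rw [Finset.sum_congr rfl fun p _ => this p, Finset.sum_add_distrib,
        elem_wsum, elem_wsum]
      rw [hδdef, hδ'def]
      ring
    · intro heq
      have hval := congrFun (congrFun heq i) b
      have hz2 : elem i' a' b' (-δ) i b = 0 := by
        by_contra hne
        obtain ⟨hp, hq⟩ := elem_support hne
        rcases hq with h | h
        · exact h1 (by rw [hp, h])
        · exact h2 (by rw [hp, h])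
      rw [elem_apply_b δ' hab, hz2] at hval
      simp only [Pi.zero_apply, add_zero] at hval
      exact hδ' (neg_eq_zero.mp hval)

end Opt314

open Opt314


/-- Lemma 3.2 of the paper: if the feasible set `F(t)` of the LP `Φ(t)` is nonempty,
then there is an optimal solution in which at most one item `i*` has exactly two
choices with positive weight, and every other item has exactly one choice taken
integrally (with value `1`). -/
theorem exists_optimal_well_structured
    (n m : ℕ) (hn : 1 ≤ n) (hm : 1 ≤ m)
    (w μ : Fin n → Fin m → ℝ)
    (hμnn : ∀ i j, 0 ≤ μ i j)
    (t : ℝ) (ht : 0 < t)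
    (hne : ∃ x : Fin n → Fin m → ℝ,
      (∀ i j, 0 ≤ x i j) ∧ (∀ i, ∑ j, x i j = 1) ∧
      ∑ i, ∑ j, μ i j * x i j ≤ t) :
    ∃ x : Fin n → Fin m → ℝ,
      ((∀ i j, 0 ≤ x i j) ∧ (∀ i, ∑ j, x i j = 1) ∧
        ∑ i, ∑ j, μ i j * x i j ≤ t) ∧
      (∀ y : Fin n → Fin m → ℝ,
        ((∀ i j, 0 ≤ y i j) ∧ (∀ i, ∑ j, y i j = 1) ∧
          ∑ i, ∑ j, μ i j * y i j ≤ t) →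
        ∑ i, ∑ j, w i j * y i j ≤ ∑ i, ∑ j, w i j * x i j) ∧
      (∃ istar : Fin n,
        (∀ i, i ≠ istar → ∃ j, x i j = 1 ∧ ∀ j', j' ≠ j → x i j' = 0) ∧
        (Finset.univ.filter fun j => 0 < x istar j).card ≤ 2) := by
  -- minimal-support optimal solution
  have hne' : ∃ x, Feas μ t x := hne
  set S : Set ℕ := {k | ∃ x, Feas μ t x ∧ (∀ y, Feas μ t y → V w y ≤ V w x) ∧
    (supp x).card = k} with hS
  have hSne : S.Nonempty := by
    obtain ⟨x, hx, hmax⟩ := exists_opt w μ t hne'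
    exact ⟨(supp x).card, x, hx, hmax, rfl⟩
  obtain ⟨x, hxf, hxmax, hxcard⟩ := Nat.sInf_mem hSne
  have hmin : ∀ x', Feas μ t x' → (∀ y, Feas μ t y → V w y ≤ V w x') →
      (supp x).card ≤ (supp x').card := by
    intro x' h1 h2
    rw [hxcard]
    exact Nat.sInf_le ⟨x', h1, h2, rfl⟩
  -- positivity sets
  set pos : Fin n → Finset (Fin m) := fun i => Finset.univ.filter fun j => 0 < x i j with hposdef
  have hposmem : ∀ i j, j ∈ pos i ↔ 0 < x i j := by
    intro i j; simp [hposdef]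
  have hpos1 : ∀ i, (pos i).Nonempty := by
    intro i
    by_contra h
    rw [Finset.not_nonempty_iff_eq_empty] at h
    have hz : ∀ j, x i j = 0 := by
      intro j
      by_contra hj
      have : j ∈ pos i := (hposmem i j).mpr ((hxf.1 i j).lt_of_ne (Ne.symm hj))
      simp [h] at this
    have := hxf.2.1 i
    rw [Finset.sum_congr rfl fun j _ => hz j, Finset.sum_const_zero] at this
    norm_num at this
  have hcard2 : ∀ i, (pos i).card ≤ 2 := by
    intro i
    by_contra h
    push_neg at h
    rw [Finset.two_lt_card_iff] at h
    obtain ⟨j1, j2, j3, hj1, hj2, hj3, h12, h13, h23⟩ := h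
    exact master w μ t x hxf hxmax hmin
      (Ne.symm h12) (Ne.symm h13)
      (by simp [h12.symm]) (by simp [h23])
      ((hposmem i j1).mp hj1) ((hposmem i j2).mp hj2)
      ((hposmem i j1).mp hj1) ((hposmem i j3).mp hj3)
  have hOne : ∀ i i', i ≠ i' → 2 ≤ (pos i).card → 2 ≤ (pos i').card → False := by
    intro i i' hii' h2 h2'
    obtain ⟨a, ha, b, hb, hba⟩ := Finset.one_lt_card.mp h2
    obtain ⟨a', ha', b', hb', hb'a'⟩ := Finset.one_lt_card.mp h2'
    exact master w μ t x hxf hxmax hmin hba.symm hb'a'.symm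
      (by simp [Prod.ext_iff, hii']) (by simp [Prod.ext_iff, hii'])
      ((hposmem i a).mp ha) ((hposmem i b).mp hb)
      ((hposmem i' a').mp ha') ((hposmem i' b').mp hb')
  have hexistar : ∃ istar : Fin n, ∀ i, i ≠ istar → (pos i).card ≤ 1 := by
    by_cases hex : ∃ i0, 2 ≤ (pos i0).card
    · obtain ⟨i0, h0⟩ := hex
      refine ⟨i0, fun i hi => ?_⟩
      by_contra h
      push_neg at h
      exact hOne i i0 hi h h0
    · push_neg at hex
      exact ⟨⟨0, hn⟩, fun i _ => Nat.lt_succ_iff.mp (hex i)⟩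
  obtain ⟨istar, histar⟩ := hexistar
  refine ⟨x, hxf, fun y hy => hxmax y hy, istar, ?_, ?_⟩
  · intro i hi
    have hc1 : (pos i).card = 1 := le_antisymm (histar i hi) (hpos1 i).card_pos
    obtain ⟨j, hj⟩ := Finset.card_eq_one.mp hc1
    have hz : ∀ j', j' ≠ j → x i j' = 0 := by
      intro j' hj'
      have hnotmem : j' ∉ pos i := by rw [hj]; simp [hj']
      have hnlt : ¬ 0 < x i j' := fun h => hnotmem ((hposmem i j').mpr h)
      exact le_antisymm (not_lt.mp hnlt) (hxf.1 i j')
    have hxj : x i j = 1 := by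
      have hs := hxf.2.1 i
      rwa [Finset.sum_eq_single j (fun j' _ hj' => hz j' hj')
        (fun h => absurd (Finset.mem_univ j) h)] at hs
    exact ⟨j, hxj, hz⟩
  · exact hcard2 istar
end

section
/- Let (Ω, 𝒜, P) be a probability space, let t > 0, and let s_1, …, s_n : Ω → ℝ be jointly independent measurable random variables with s_i ≥ 0 almost surely. For each i ∈ {1,…,n}, let A_i = {ω : ∑_{j=1}^{i−1} s_j(ω) < t} be the event that item i is attempted (A_1 = Ω). Then ∑_{i=1}^n 𝔼[min(s_i, t)] · P(A_i) ≤ 2t. -/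
open MeasureTheory ProbabilityTheory

/-- Pointwise telescoping bound. -/
lemma ptwise_truncated_sum_le (t : ℝ) (ht : 0 < t) (n : ℕ) (a : ℕ → ℝ)
    (ha : ∀ i, 0 ≤ a i) :
    ∑ i ∈ Finset.range n,
      (if (∑ j ∈ Finset.range i, a j) < t then min (a i) t else 0) ≤ 2 * t := by
  set g : ℕ → ℝ := fun k => min (∑ j ∈ Finset.range k, a j) (2 * t) with hg
  have hS : ∀ k, 0 ≤ ∑ j ∈ Finset.range k, a j := fun k =>
    Finset.sum_nonneg fun j _ => ha j
  have hstep : ∀ i, (if (∑ j ∈ Finset.range i, a j) < t then min (a i) t else 0)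
      ≤ g (i + 1) - g i := by
    intro i
    have hmono : g i ≤ g (i + 1) := by
      apply min_le_min _ le_rfl
      rw [Finset.sum_range_succ]
      linarith [ha i]
    by_cases h : (∑ j ∈ Finset.range i, a j) < t
    · simp only [if_pos h]
      have hgi : g i = ∑ j ∈ Finset.range i, a j := min_eq_left (by linarith)
      have : min (a i) t + ∑ j ∈ Finset.range i, a j ≤ g (i + 1) := by
        apply le_min
        · rw [Finset.sum_range_succ]; linarith [min_le_left (a i) t]
        · linarith [min_le_right (a i) t]
      linarith
    · simp only [if_neg h]; linarith
  calc ∑ i ∈ Finset.range n, (if (∑ j ∈ Finset.range i, a j) < t then min (a i) t else 0)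
      ≤ ∑ i ∈ Finset.range n, (g (i + 1) - g i) := Finset.sum_le_sum fun i _ => hstep i
    _ = g n - g 0 := Finset.sum_range_sub g n
    _ ≤ 2 * t := by
        simp only [hg]
        have h0 : min (∑ j ∈ Finset.range 0, a j) (2*t) = 0 := by simp; positivity
        linarith [min_le_right (∑ j ∈ Finset.range n, a j) (2*t)]

/-- Fin-filter sum rewritten as a `range` sum. -/
lemma fin_filter_sum_eq {n : ℕ} (i : Fin n) (f : Fin n → ℝ) :
    ∑ j ∈ Finset.univ.filter (fun j => j < i), f j
      = ∑ k ∈ Finset.range i.val, (fun k => if h : k < n then f ⟨k, h⟩ else 0) k := by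
  set b : ℕ → ℝ := fun k => if h : k < n then f ⟨k, h⟩ else 0 with hb
  have h1 : ∑ j ∈ Finset.univ.filter (fun j => j < i), f j
      = ∑ j : Fin n, (if (j : ℕ) < (i : ℕ) then b (j : ℕ) else 0) := by
    rw [Finset.sum_filter]
    refine Finset.sum_congr rfl fun j _ => ?_
    rcases lt_or_ge (j : ℕ) (i : ℕ) with h | h
    · rw [if_pos h, if_pos (Fin.lt_def.2 h), hb]; simp [j.isLt]
    · rw [if_neg (not_lt.2 h), if_neg (fun hc => absurd (Fin.lt_def.1 hc) (not_lt.2 h))]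
  rw [h1, Fin.sum_univ_eq_sum_range (fun k => if k < (i : ℕ) then b k else 0) n]
  rw [← Finset.sum_subset (Finset.range_subset_range.2 i.isLt.le)
    (fun k _ hk => by
      simp only [Finset.mem_range, not_lt] at hk
      simp [if_neg (by omega : ¬ k < (i : ℕ))])]
  refine Finset.sum_congr rfl fun k hk => ?_
  simp [if_pos (Finset.mem_range.1 hk)]

/-- Fixed-order instantiation of Lemma 3.6 of the paper: for independent nonnegative
random sizes `s_1,…,s_n` processed in order with overflow stopping at budget `t`, the
expected total truncated mean size of attempted items is at most `2t`. Here
`A_i = {ω : ∑_{j<i} s_j(ω) < t}` is the event that item `i` is attempted. -/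
theorem expected_truncated_mass_le_two_budget
    {Ω : Type*} [MeasurableSpace Ω] (P : Measure Ω) [IsProbabilityMeasure P]
    (t : ℝ) (ht : 0 < t) (n : ℕ) (s : Fin n → Ω → ℝ)
    (hmeas : ∀ i, Measurable (s i))
    (hnn : ∀ i, ∀ᵐ ω ∂P, 0 ≤ s i ω)
    (hindep : iIndepFun s P) :
    ∑ i, (∫ ω, min (s i ω) t ∂P) *
        (P {ω | ∑ j ∈ Finset.univ.filter (fun j => j < i), s j ω < t}).toReal
      ≤ 2 * t := by
  set T : Fin n → Ω → ℝ :=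
    fun i ω => ∑ j ∈ Finset.univ.filter (fun j => j < i), s j ω with hT
  set A : Fin n → Set Ω := fun i => {ω | T i ω < t} with hA
  have hTmeas : ∀ i, Measurable (T i) := fun i =>
    Finset.measurable_sum _ fun j _ => hmeas j
  have hAmeas : ∀ i, MeasurableSet (A i) := fun i =>
    (hTmeas i) measurableSet_Iio
  set X : Fin n → Ω → ℝ := fun i ω => min (s i ω) t with hX
  have hXmeas : ∀ i, Measurable (X i) := fun i => (hmeas i).min measurable_const
  have hXint : ∀ i, Integrable (X i) P := by
    intro i
    refine Integrable.mono' (integrable_const t) (hXmeas i).aestronglyMeasurable ?_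
    filter_upwards [hnn i] with ω hω
    rw [Real.norm_eq_abs, abs_of_nonneg (le_min hω ht.le)]
    exact min_le_right _ _
  -- Step 1: independence identity
  have key : ∀ i, (∫ ω, X i ω ∂P) * (P (A i)).toReal
      = ∫ ω, (A i).indicator (X i) ω ∂P := by
    intro i
    have hi : i ∉ Finset.univ.filter (fun j => j < i) := by simp
    have hIF0 : IndepFun (T i) (s i) P := by
      have := hindep.indepFun_finsetSum_of_notMem hmeas hi
      have heq : (∑ j ∈ Finset.univ.filter (fun j => j < i), s j) = T i := by
        funext ω; simp [hT, Finset.sum_apply]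
      rwa [heq] at this
    have hφ : Measurable ((Set.Iio t).indicator (fun _ => (1:ℝ))) :=
      measurable_const.indicator measurableSet_Iio
    have hψ : Measurable (fun x : ℝ => min x t) := measurable_id.min measurable_const
    have hIF : IndepFun (fun ω => (Set.Iio t).indicator (fun _ => (1:ℝ)) (T i ω))
        (fun ω => min (s i ω) t) P := hIF0.comp hφ hψ
    have hind_int : Integrable (fun ω => (Set.Iio t).indicator (fun _ => (1:ℝ)) (T i ω)) P := by
      have : (fun ω => (Set.Iio t).indicator (fun _ => (1:ℝ)) (T i ω))
          = (A i).indicator (fun _ => (1:ℝ)) := by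
        funext ω
        by_cases h : T i ω < t <;>
          simp [Set.indicator_apply, hA, Set.mem_setOf_eq, h]
      rw [this]
      exact (integrable_const (1:ℝ)).indicator (hAmeas i)
    have hmul := IndepFun.integral_mul_eq_mul_integral hIF ((hφ.comp (hTmeas i)).aestronglyMeasurable)
      (hXmeas i).aestronglyMeasurable
    have hprod : ((fun ω => (Set.Iio t).indicator (fun _ => (1:ℝ)) (T i ω)) * (fun ω => min (s i ω) t))
        = (A i).indicator (X i) := by
      funext ω
      simp only [Pi.mul_apply]
      by_cases h : T i ω < t <;>
        simp [Set.indicator_apply, hA, hX, Set.mem_setOf_eq, h]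
    have hindval : (∫ ω, (Set.Iio t).indicator (fun _ => (1:ℝ)) (T i ω) ∂P)
        = (P (A i)).toReal := by
      have : (fun ω => (Set.Iio t).indicator (fun _ => (1:ℝ)) (T i ω))
          = (A i).indicator (fun _ => (1:ℝ)) := by
        funext ω
        by_cases h : T i ω < t <;>
          simp [Set.indicator_apply, hA, Set.mem_setOf_eq, h]
      rw [this]
      rw [← measureReal_def]; exact integral_indicator_one (hAmeas i)
    rw [hprod] at hmul
    rw [hmul, hindval, mul_comm]
  have hIXint : ∀ i, Integrable ((A i).indicator (X i)) P := fun i =>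
    (hXint i).indicator (hAmeas i)
  calc ∑ i, (∫ ω, X i ω ∂P) * (P (A i)).toReal
      = ∑ i, ∫ ω, (A i).indicator (X i) ω ∂P := by
        exact Finset.sum_congr rfl fun i _ => key i
    _ = ∫ ω, ∑ i, (A i).indicator (X i) ω ∂P :=
        (integral_finset_sum _ fun i _ => hIXint i).symm
    _ ≤ ∫ _, 2 * t ∂P := by
        refine integral_mono_ae (integrable_finset_sum _ fun i _ => hIXint i)
          (integrable_const _) ?_
        filter_upwards [ae_all_iff.2 hnn] with ω hω
        set a : ℕ → ℝ := fun k => if h : k < n then s ⟨k, h⟩ ω else 0 with ha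
        have hanonneg : ∀ k, 0 ≤ a k := by
          intro k
          by_cases h : k < n <;> simp [ha, h]
          · exact hω ⟨k, h⟩
        have hterm : ∀ i : Fin n, (A i).indicator (X i) ω
            = (fun k => if (∑ j ∈ Finset.range k, a j) < t then min (a k) t else 0) i.val := by
          intro i
          have hTi : T i ω = ∑ j ∈ Finset.range i.val, a j := by
            simpa [ha] using fin_filter_sum_eq i (fun j => s j ω)
          have hai : a i.val = s i ω := by simp [ha, i.isLt]
          by_cases h : T i ω < t <;>
            simp [Set.indicator_apply, hA, hX, Set.mem_setOf_eq, h, ← hTi, hai]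
        calc ∑ i, (A i).indicator (X i) ω
            = ∑ i : Fin n,
              (fun k => if (∑ j ∈ Finset.range k, a j) < t then min (a k) t else 0) i.val :=
              Finset.sum_congr rfl fun i _ => hterm i
          _ = ∑ k ∈ Finset.range n,
              (if (∑ j ∈ Finset.range k, a j) < t then min (a k) t else 0) :=
              Fin.sum_univ_eq_sum_range
                (fun k => if (∑ j ∈ Finset.range k, a j) < t then min (a k) t else 0) n
          _ ≤ 2 * t := ptwise_truncated_sum_le t ht n a hanonneg
    _ = 2 * t := by simp
end

section
/- Let r ≥ 0 be an integer, α ≥ 0, and let w_1,…,w_r and μ_1,…,μ_r be nonnegative reals ordered by decreasing density, meaning w_k·μ_j ≤ w_j·μ_k whenever 1 ≤ j ≤ k ≤ r. Let W = ∑_{k=1}^r w_k, assume ∑_{k=1}^r μ_k ≤ 1, and let M be a real with w_k ≤ M for all k and M ≤ W/(4(1+α)). Then ∑_{k=1}^r w_k·(1 − ∑_{j=1}^k μ_j) − α·M ≥ W/4. -/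
/-- Deterministic core of Claim 3.8 of the paper: for items ordered by decreasing
density with total weight `W = ∑ w_k`, total size at most `1`, and per-item weight
bounded by `M ≤ W/(4(1+α))`, the greedy profit bound
`∑_k w_k·(1 − ∑_{j≤k} μ_j) − α·M` is at least `W/4`. -/
theorem skc_greedy_bound
    (r : ℕ) (α : ℝ) (hα : 0 ≤ α)
    (w μ : Fin r → ℝ)
    (hw : ∀ k, 0 ≤ w k) (hμ : ∀ k, 0 ≤ μ k)
    (hdens : ∀ j k : Fin r, j ≤ k → w k * μ j ≤ w j * μ k)
    (hμsum : ∑ k, μ k ≤ 1)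
    (M : ℝ) (hM : ∀ k, w k ≤ M)
    (hMT : M ≤ (∑ k, w k) / (4 * (1 + α))) :
    (∑ k, w k) / 4 ≤
      ∑ k, w k * (1 - ∑ j ∈ Finset.Iic k, μ j) - α * M := by
  rcases Nat.eq_zero_or_pos r with hr | hr
  · subst hr
    simp only [Finset.univ_eq_empty, Finset.sum_empty] at *
    have h4 : (0:ℝ) < 4 * (1 + α) := by positivity
    have hM0 : M ≤ 0 := by
      have := hMT
      rw [zero_div] at this
      exact this
    nlinarith [mul_nonpos_of_nonneg_of_nonpos hα hM0]
  have hM0 : 0 ≤ M := le_trans (hw ⟨0, hr⟩) (hM ⟨0, hr⟩)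
  set W := ∑ k, w k with hW
  set σ := ∑ k, μ k with hσ
  have hW0 : 0 ≤ W := Finset.sum_nonneg fun k _ => hw k
  -- swap lemma for triangular sums
  have swap : ∀ F : Fin r → Fin r → ℝ,
      ∑ k, ∑ j ∈ Finset.Iio k, F j k = ∑ j, ∑ k ∈ Finset.Ioi j, F j k := by
    intro F
    exact Finset.sum_comm' (fun x y => by
      simp [Finset.mem_Iio, Finset.mem_Ioi, and_comm])
  -- sum over complement
  have compl : ∀ i : Fin r, ∑ j ∈ ({i}ᶜ : Finset (Fin r)), μ j = σ - μ i := by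
    intro i
    have h := Finset.sum_compl_add_sum ({i} : Finset (Fin r)) μ
    simp only [Finset.sum_singleton] at h
    linarith
  -- split complement as Ioi ∪ Iio
  have hsplit : ∀ i : Fin r, ∑ j ∈ ({i}ᶜ : Finset (Fin r)), w i * μ j
      = (∑ j ∈ Finset.Ioi i, w i * μ j) + ∑ j ∈ Finset.Iio i, w i * μ j := by
    intro i
    rw [← Finset.sum_disjUnion (Finset.disjoint_Ioi_Iio i)]
    apply Finset.sum_congr _ fun _ _ => rfl
    ext j
    simp only [Finset.mem_compl, Finset.mem_singleton, Finset.mem_disjUnion,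
      Finset.mem_Ioi, Finset.mem_Iio]
    constructor
    · intro h; exact (lt_or_gt_of_ne (Ne.symm h)).imp id id
    · rintro (h | h) <;> exact fun he => absurd he (by subst he; exact absurd h (lt_irrefl _))
  -- A = lower-triangular sum
  have hA2 : 2 * (∑ k, ∑ j ∈ Finset.Iio k, w k * μ j)
      ≤ W * σ - ∑ k, w k * μ k := by
    have e1 : ∑ k, ∑ j ∈ Finset.Iio k, w k * μ j
        = ∑ j, ∑ k ∈ Finset.Ioi j, w k * μ j := swap (fun j k => w k * μ j)
    have e2 : ∑ k, ∑ j ∈ Finset.Iio k, w j * μ k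
        = ∑ j, ∑ k ∈ Finset.Ioi j, w j * μ k := swap (fun j k => w j * μ k)
    have hle : ∑ j, ∑ k ∈ Finset.Ioi j, w k * μ j
        ≤ ∑ j, ∑ k ∈ Finset.Ioi j, w j * μ k := by
      refine Finset.sum_le_sum fun j _ => Finset.sum_le_sum fun k hk => ?_
      exact hdens j k (le_of_lt (Finset.mem_Ioi.mp hk))
    have etot : (∑ i, ∑ j ∈ Finset.Ioi i, w i * μ j)
        + (∑ k, ∑ j ∈ Finset.Iio k, w k * μ j)
        = W * σ - ∑ k, w k * μ k := by
      have : ∑ i, ∑ j ∈ ({i}ᶜ : Finset (Fin r)), w i * μ j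
          = W * σ - ∑ k, w k * μ k := by
        have : ∀ i : Fin r, ∑ j ∈ ({i}ᶜ : Finset (Fin r)), w i * μ j
            = w i * σ - w i * μ i := by
          intro i
          rw [← Finset.mul_sum, compl i]
          ring
        rw [Finset.sum_congr rfl fun i _ => this i, Finset.sum_sub_distrib,
          ← Finset.sum_mul]
      rw [← this]
      rw [Finset.sum_congr rfl fun i (_ : i ∈ Finset.univ) => hsplit i,
        Finset.sum_add_distrib]
    -- note e2's LHS inner: ∑ j ∈ Iio k, w j * μ k ; its RHS = ∑ j, ∑ k ∈ Ioi j, w j * μ k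
    -- etot second summand equals, via e2 reversed... we need:
    have key : ∑ i, ∑ j ∈ Finset.Ioi i, w i * μ j
        = ∑ k, ∑ j ∈ Finset.Iio k, w j * μ k := e2.symm
    calc 2 * (∑ k, ∑ j ∈ Finset.Iio k, w k * μ j)
        = (∑ j, ∑ k ∈ Finset.Ioi j, w k * μ j)
          + (∑ k, ∑ j ∈ Finset.Iio k, w k * μ j) := by rw [← e1]; ring
      _ ≤ (∑ j, ∑ k ∈ Finset.Ioi j, w j * μ k)
          + (∑ k, ∑ j ∈ Finset.Iio k, w k * μ j) := by linarith
      _ = (∑ i, ∑ j ∈ Finset.Ioi i, w i * μ j)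
          + (∑ k, ∑ j ∈ Finset.Iio k, w k * μ j) := by rw [← e2]
      _ = W * σ - ∑ k, w k * μ k := etot
  -- the main sum S
  have hS : ∑ k, w k * ∑ j ∈ Finset.Iic k, μ j
      = (∑ k, w k * μ k) + ∑ k, ∑ j ∈ Finset.Iio k, w k * μ j := by
    have : ∀ k : Fin r, w k * ∑ j ∈ Finset.Iic k, μ j
        = w k * μ k + ∑ j ∈ Finset.Iio k, w k * μ j := by
      intro k
      rw [← Finset.add_sum_Iio_eq_sum_Iic (f := μ) k, mul_add, Finset.mul_sum]
    rw [Finset.sum_congr rfl fun k _ => this k, Finset.sum_add_distrib]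
  have hwμ : ∑ k, w k * μ k ≤ M * σ := by
    rw [hσ, Finset.mul_sum]
    exact Finset.sum_le_sum fun k _ => mul_le_mul_of_nonneg_right (hM k) (hμ k)
  have hσ1 : σ ≤ 1 := hμsum
  have hσ0 : 0 ≤ σ := Finset.sum_nonneg fun k _ => hμ k
  have h1 : W * σ ≤ W := mul_le_of_le_one_right hW0 hσ1
  have h2 : M * σ ≤ M := mul_le_of_le_one_right hM0 hσ1
  have h4 : (0:ℝ) < 4 * (1 + α) := by positivity
  have hMW : M * (4 * (1 + α)) ≤ W := (le_div_iff₀ h4).mp hMT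
  have hgoal : ∑ k, w k * (1 - ∑ j ∈ Finset.Iic k, μ j)
      = W - ∑ k, w k * ∑ j ∈ Finset.Iic k, μ j := by
    rw [hW, ← Finset.sum_sub_distrib]
    exact Finset.sum_congr rfl fun k _ => by ring
  rw [hgoal]
  nlinarith [hA2, hS, hwμ, h1, h2, hMW, hM0, hα, mul_nonneg hα hM0]
end

section
/- Let r ≥ 0 be an integer, t > 0, and let w_1,…,w_r and μ_1,…,μ_r be nonnegative reals ordered by decreasing density, meaning w_k·μ_j ≤ w_j·μ_k whenever 1 ≤ j ≤ k ≤ r. Let W = ∑_{k=1}^r w_k, assume ∑_{k=1}^r μ_k ≤ t, and let M ≥ 0 be a real with w_k ≤ M for all k. Then ∑_{k=1}^r w_k·(1 − (1/t)·∑_{j=1}^k μ_j) ≥ W/2 − M. -/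
/-- Deterministic core inequality of Lemma 6.1 of the paper (analysis of SKC-OF with
budget `t`): for items ordered by decreasing density with total weight `W = ∑ w_k`,
total size at most `t`, and per-item weight bounded by `M`, we have
`∑_k w_k·(1 − (1/t)∑_{j≤k} μ_j) ≥ W/2 − M`. -/
theorem skc_of_greedy_bound
    (r : ℕ) (t : ℝ) (ht : 0 < t)
    (w μ : Fin r → ℝ)
    (hw : ∀ k, 0 ≤ w k) (hμ : ∀ k, 0 ≤ μ k)
    (hdens : ∀ j k : Fin r, j ≤ k → w k * μ j ≤ w j * μ k)
    (hμsum : ∑ k, μ k ≤ t)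
    (M : ℝ) (hM0 : 0 ≤ M) (hM : ∀ k, w k ≤ M) :
    (∑ k, w k) / 2 - M ≤
      ∑ k, w k * (1 - (1 / t) * ∑ j ∈ Finset.Iic k, μ j) := by
  set W := ∑ k, w k with hW
  set σ := ∑ k, μ k with hσ
  set D := ∑ k, w k * μ k with hD
  set T := ∑ k, ∑ j ∈ Finset.Iic k, w k * μ j with hT
  have hW0 : 0 ≤ W := Finset.sum_nonneg fun k _ => hw k
  have hσ0 : 0 ≤ σ := Finset.sum_nonneg fun k _ => hμ k
  have hAB : T ≤ ∑ k, ∑ j ∈ Finset.Iic k, w j * μ k := by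
    apply Finset.sum_le_sum
    intro k _
    apply Finset.sum_le_sum
    intro j hj
    exact hdens j k (Finset.mem_Iic.mp hj)
  have hBswap : (∑ k, ∑ j ∈ Finset.Iic k, w j * μ k)
      = ∑ j, ∑ k ∈ Finset.Ici j, w j * μ k := by
    apply Finset.sum_comm'
    intro x y
    simp [Finset.mem_Iic, Finset.mem_Ici]
  have hsplit : ∀ k : Fin r,
      (∑ j ∈ Finset.Iic k, μ j) + ∑ j ∈ Finset.Ici k, μ j = σ + μ k := by
    intro k
    have h1 : Finset.Iic k = insert k (Finset.Iio k) := by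
      ext x; simp [Finset.mem_Iic, Finset.mem_Iio, le_iff_lt_or_eq, or_comm]
    have h2 : (Finset.Iio k) ∪ (Finset.Ici k) = Finset.univ := by
      ext x; simp [Finset.mem_Iio, Finset.mem_Ici]; exact lt_or_ge x k
    have h3 : Disjoint (Finset.Iio k) (Finset.Ici k) := by
      rw [Finset.disjoint_left]
      intro a ha hb
      exact absurd (Finset.mem_Ici.mp hb) (not_le.mpr (Finset.mem_Iio.mp ha))
    have h4 : (∑ j ∈ Finset.Iio k, μ j) + ∑ j ∈ Finset.Ici k, μ j = σ := by
      rw [hσ, ← h2, Finset.sum_union h3]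
    rw [h1, Finset.sum_insert (by simp)]
    linarith
  have hTB : T + (∑ k, ∑ j ∈ Finset.Iic k, w j * μ k) = W * σ + D := by
    rw [hBswap, hT, ← Finset.sum_add_distrib]
    have : ∀ k : Fin r, (∑ j ∈ Finset.Iic k, w k * μ j)
        + (∑ j ∈ Finset.Ici k, w k * μ j) = w k * σ + w k * μ k := by
      intro k
      rw [← Finset.mul_sum, ← Finset.mul_sum, ← mul_add, hsplit k, mul_add]
    rw [Finset.sum_congr rfl fun k _ => this k, Finset.sum_add_distrib,
      ← Finset.sum_mul]
  have h2T : 2 * T ≤ W * σ + D := by linarith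
  have hDle : D ≤ M * σ := by
    rw [hD, hσ, Finset.mul_sum]
    exact Finset.sum_le_sum fun k _ => mul_le_mul_of_nonneg_right (hM k) (hμ k)
  have hWσ : W * σ ≤ W * t := mul_le_mul_of_nonneg_left hμsum hW0
  have hMσ : M * σ ≤ M * t := mul_le_mul_of_nonneg_left hμsum hM0
  have hTle : T ≤ (W * t + M * t) / 2 := by linarith
  have hgoal : (∑ k, w k * (1 - (1 / t) * ∑ j ∈ Finset.Iic k, μ j))
      = W - (1 / t) * T := by
    rw [hT, Finset.mul_sum, hW, ← Finset.sum_sub_distrib]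
    apply Finset.sum_congr rfl
    intro k _
    rw [← Finset.mul_sum]
    ring
  rw [hgoal]
  have key : (1 / t) * T ≤ W / 2 + M / 2 := by
    rw [one_div, inv_mul_le_iff₀ ht]
    nlinarith
  linarith
end

section
/- Fix an integer k ≥ 1 and define t_j = 1 − 2^{−j} for j = 1,…,k and t_{k+1} = 1. For every ε ∈ (0,1) there exists δ₀ > 0 such that for every δ ∈ (0, δ₀) there exist nonnegative reals p_1,…,p_{k+1} with ∑_{j=1}^{k+1} p_j = ε such that for every r ∈ {1,…,k}: ∑_{j=1}^{k+1} (ε/(k+1))·t_j^r + ε·1^r = (1−2ε)·δ^r + ∑_{j=1}^{k+1} p_j·t_j^r + ε·1^r; equivalently, ∑_{j=1}^{k+1} t_j^r·(ε/(k+1) − p_j) = (1−2ε)·δ^r for all r = 1,…,k. -/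
open Polynomial Finset
noncomputable def MMnodes (k : ℕ) : ℕ → ℝ := fun j => if j = k + 1 then (1 : ℝ) else 1 - (1 / 2) ^ j

lemma MMnodes_injOn (k : ℕ) : Set.InjOn (MMnodes k) (Finset.Icc 1 (k + 1)) := by
  have hlt : ∀ j : ℕ, (0:ℝ) < (1/2)^j := fun j => by positivity
  have hanti : StrictAnti (fun n : ℕ => ((1:ℝ)/2) ^ n) :=
    fun m n h => pow_lt_pow_right_of_lt_one₀ (by norm_num) (by norm_num) h
  intro i hi j hj hij
  unfold MMnodes at hij
  by_cases hik : i = k + 1 <;> by_cases hjk : j = k + 1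
  · omega
  · simp only [hik, if_true, if_pos rfl, if_neg hjk] at hij
    have := hlt j; linarith
  · simp only [hjk, if_true, if_pos rfl, if_neg hik] at hij
    have := hlt i; linarith
  · simp only [if_neg hik, if_neg hjk] at hij
    have h2 : ((1:ℝ)/2)^i = (1/2)^j := by linarith
    exact hanti.injective h2

lemma MMnodes_coeff_sum (k r s : ℕ) (hr : r ≤ k) :
    ∑ j ∈ Finset.Icc 1 (k + 1),
        (MMnodes k j) ^ r * (Lagrange.basis (Finset.Icc 1 (k + 1)) (MMnodes k) j).coeff s
      = if s = r then 1 else 0 := by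
  have hcard : (Finset.Icc 1 (k + 1)).card = k + 1 := by
    rw [Nat.card_Icc]; omega
  have hdeg : ((X : ℝ[X]) ^ r).degree < (Finset.Icc 1 (k + 1)).card := by
    rw [degree_X_pow, hcard]
    exact_mod_cast Nat.lt_succ_of_le hr
  have h := Lagrange.eq_interpolate (v := MMnodes k) (MMnodes_injOn k) hdeg
  have h2 := congrArg (fun q : ℝ[X] => q.coeff s) h
  simp only [Lagrange.interpolate_apply, finset_sum_coeff, coeff_C_mul, eval_pow, eval_X,
    coeff_X_pow] at h2
  exact h2.symm




/-- Moment-matching construction of Theorem 5.2 of the paper: with nodes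
`t_j = 1 − 2^{−j}` for `j = 1,…,k` and `t_{k+1} = 1`, for every `ε ∈ (0,1)` there is a
`δ₀ > 0` such that for every `δ ∈ (0, δ₀)` there are nonnegative probabilities `p_j`
summing to `ε` matching the first `k` moments:
`∑_j (ε/(k+1))·t_j^r + ε·1^r = (1−2ε)·δ^r + ∑_j p_j·t_j^r + ε·1^r`, equivalently
`∑_j t_j^r·(ε/(k+1) − p_j) = (1−2ε)·δ^r`, for all `r = 1,…,k`. -/
theorem moment_matching_construction
    (k : ℕ) (hk : 1 ≤ k) (ε : ℝ) (hε0 : 0 < ε) (hε1 : ε < 1) :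
    ∃ δ₀ : ℝ, 0 < δ₀ ∧ ∀ δ : ℝ, 0 < δ → δ < δ₀ →
      ∃ p : ℕ → ℝ,
        (∀ j ∈ Finset.Icc 1 (k + 1), 0 ≤ p j) ∧
        (∑ j ∈ Finset.Icc 1 (k + 1), p j = ε) ∧
        (∀ r ∈ Finset.Icc 1 k,
          ∑ j ∈ Finset.Icc 1 (k + 1),
              (ε / ((k : ℝ) + 1)) *
                (if j = k + 1 then (1 : ℝ) else 1 - (1 / 2) ^ j) ^ r
            + ε * 1 ^ r
          = (1 - 2 * ε) * δ ^ r
            + ∑ j ∈ Finset.Icc 1 (k + 1),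
                p j * (if j = k + 1 then (1 : ℝ) else 1 - (1 / 2) ^ j) ^ r
            + ε * 1 ^ r) ∧
        (∀ r ∈ Finset.Icc 1 k,
          ∑ j ∈ Finset.Icc 1 (k + 1),
              (if j = k + 1 then (1 : ℝ) else 1 - (1 / 2) ^ j) ^ r *
                (ε / ((k : ℝ) + 1) - p j)
          = (1 - 2 * ε) * δ ^ r) := by
  classical
  have htsimp : ∀ j : ℕ, (if j = k + 1 then (1:ℝ) else 1 - (1/2)^j) = MMnodes k j :=
    fun j => rfl
  set S : Finset ℕ := Finset.Icc 1 (k + 1) with hS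
  set c : ℕ → ℕ → ℝ := fun j s => (Lagrange.basis S (MMnodes k) j).coeff s with hc
  set C : ℝ := ∑ j ∈ S, ∑ s ∈ Finset.Icc 1 k, |c j s| with hCdef
  have hC0 : 0 ≤ C :=
    Finset.sum_nonneg fun j _ => Finset.sum_nonneg fun s _ => abs_nonneg _
  set B : ℝ := |1 - 2*ε| * C + 1 with hBdef
  have hB0 : 0 < B := by positivity
  have hk1 : (0:ℝ) < (k:ℝ) + 1 := by positivity
  refine ⟨min 1 (ε / (((k:ℝ) + 1) * B)), lt_min one_pos (by positivity), ?_⟩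
  intro δ hδ0 hδ1
  have hδle1 : δ ≤ 1 := le_of_lt (lt_of_lt_of_le hδ1 (min_le_left _ _))
  set x : ℕ → ℝ := fun j => ∑ s ∈ Finset.Icc 1 k, (1 - 2*ε) * δ^s * c j s with hx
  -- moment computation
  have hmom : ∀ r : ℕ, r ≤ k → ∑ j ∈ S, (MMnodes k j)^r * x j
      = if r ∈ Finset.Icc 1 k then (1 - 2*ε) * δ^r else 0 := by
    intro r hr
    have step : ∀ s : ℕ, ∑ j ∈ S, (MMnodes k j)^r * ((1 - 2*ε)*δ^s * c j s)
        = (1 - 2*ε)*δ^s * (if s = r then 1 else 0) := by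
      intro s
      rw [← MMnodes_coeff_sum k r s hr, Finset.mul_sum]
      exact Finset.sum_congr rfl fun j _ => by ring
    calc ∑ j ∈ S, (MMnodes k j)^r * x j
        = ∑ j ∈ S, ∑ s ∈ Finset.Icc 1 k, (MMnodes k j)^r * ((1 - 2*ε)*δ^s * c j s) := by
          simp only [hx, Finset.mul_sum]
      _ = ∑ s ∈ Finset.Icc 1 k, ∑ j ∈ S, (MMnodes k j)^r * ((1 - 2*ε)*δ^s * c j s) :=
          Finset.sum_comm
      _ = ∑ s ∈ Finset.Icc 1 k, (1 - 2*ε)*δ^s * (if s = r then 1 else 0) :=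
          Finset.sum_congr rfl fun s _ => step s
      _ = if r ∈ Finset.Icc 1 k then (1 - 2*ε)*δ^r else 0 := by
          simp_rw [mul_ite, mul_one, mul_zero]
          exact Finset.sum_ite_eq' _ r _
  -- bound on x
  have hxbound : ∀ j ∈ S, |x j| ≤ ε / ((k:ℝ)+1) := by
    intro j hj
    have h1 : |x j| ≤ ∑ s ∈ Finset.Icc 1 k, |1 - 2*ε| * δ * |c j s| := by
      refine (Finset.abs_sum_le_sum_abs _ _).trans (Finset.sum_le_sum fun s hs => ?_)
      rw [abs_mul, abs_mul]
      have hs1 : 1 ≤ s := (Finset.mem_Icc.mp hs).1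
      have hδs : |δ^s| ≤ δ := by
        rw [abs_of_nonneg (by positivity)]
        calc δ^s ≤ δ^1 := pow_le_pow_of_le_one hδ0.le hδle1 hs1
          _ = δ := pow_one δ
      have := mul_le_mul_of_nonneg_left hδs (abs_nonneg (1 - 2*ε))
      exact mul_le_mul_of_nonneg_right this (abs_nonneg _)
    have h3 : ∑ s ∈ Finset.Icc 1 k, |c j s| ≤ C := by
      rw [hCdef]
      exact Finset.single_le_sum
        (f := fun j => ∑ s ∈ Finset.Icc 1 k, |c j s|)
        (fun i _ => Finset.sum_nonneg fun s _ => abs_nonneg _) hj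
    have h2 : ∑ s ∈ Finset.Icc 1 k, |1 - 2*ε| * δ * |c j s| = δ * (|1 - 2*ε| * ∑ s ∈ Finset.Icc 1 k, |c j s|) := by
      rw [Finset.mul_sum, Finset.mul_sum]
      exact Finset.sum_congr rfl fun s _ => by ring
    have h4 : δ * (|1 - 2*ε| * ∑ s ∈ Finset.Icc 1 k, |c j s|) ≤ δ * B := by
      apply mul_le_mul_of_nonneg_left _ hδ0.le
      rw [hBdef]
      have := mul_le_mul_of_nonneg_left h3 (abs_nonneg (1 - 2*ε))
      linarith
    have h5 : δ * B < ε / ((k:ℝ)+1) := by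
      have hδ2 : δ < ε / (((k:ℝ)+1) * B) := lt_of_lt_of_le hδ1 (min_le_right _ _)
      have := mul_lt_mul_of_pos_right hδ2 hB0
      have heq : ε / (((k:ℝ)+1) * B) * B = ε / ((k:ℝ)+1) := by
        field_simp
      linarith
    exact le_of_lt (lt_of_le_of_lt ((h1.trans_eq h2).trans h4) h5)
  have hx0 : ∑ j ∈ S, x j = 0 := by
    have h := hmom 0 (Nat.zero_le k)
    simp only [pow_zero, one_mul] at h
    rw [h]
    simp
  refine ⟨fun j => ε/((k:ℝ)+1) - x j, ?_, ?_, ?_, ?_⟩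
  · intro j hj
    have := (abs_le.mp (hxbound j hj)).2
    simp only
    linarith
  · rw [Finset.sum_sub_distrib, hx0, Finset.sum_const]
    have hcard : S.card = k + 1 := by rw [hS, Nat.card_Icc]; omega
    rw [hcard, nsmul_eq_mul]
    push_cast
    field_simp
    ring
  · intro r hr
    simp only [htsimp]
    have hrk : r ≤ k := (Finset.mem_Icc.mp hr).2
    have hmr : ∑ j ∈ S, (MMnodes k j)^r * x j = (1 - 2*ε) * δ^r := by
      rw [hmom r hrk, if_pos hr]
    have expand : ∑ j ∈ S, (ε/((k:ℝ)+1)) * (MMnodes k j)^r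
        - ∑ j ∈ S, (ε/((k:ℝ)+1) - x j) * (MMnodes k j)^r
        = ∑ j ∈ S, (MMnodes k j)^r * x j := by
      rw [← Finset.sum_sub_distrib]
      exact Finset.sum_congr rfl fun j _ => by ring
    linarith
  · intro r hr
    simp only [htsimp, sub_sub_cancel]
    have hrk : r ≤ k := (Finset.mem_Icc.mp hr).2
    rw [hmom r hrk, if_pos hr]
end
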